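/- (Theorem 3, information locality construction) Let q be a prime power, F_q the field with q elements, and F an extension of F_q of degree m. Let n_L, α, t, Δ, K be positive integers, let a_1 ≥ … ≥ a_{n_L} ≥ 0 be integers with K_L := P(n_L) ≥ 1, and assume K ≤ t·K_L and m ≥ t·K_L + Δ·α. Let B be a K_L × (n_L·α) URA matrix over F_q with profile (a_1,…,a_{n_L}), and let G be the (t·K_L + Δα) × (t·n_L·α + Δα) block-diagonal matrix whose first t diagonal blocks are copies of B and whose last diagonal block is the (Δα) × (Δα) identity matrix; G has n := t·n_L + Δ thick columns of width α (the last Δ thick columns coming from the identity block). Let θ_1,…,θ_{tK_L+Δα} ∈ F be linearly independent over F_q, and let C ⊆ F^{nα} consist of all vectors (f(θ_1),…,f(θ_{tK_L+Δα}))·G, where f ranges over linearized polynomials of q-degree at most K−1 over F. Then the encoding map is injective and the minimum thick Hamming distance of C, viewed as a length-n code over the alphabet F^α, is exactly d_min = n − P^{inv}(K) + 1, where P, P^{inv} use the period-n_L periodic extension of the profile (a_1,…,a_{n_L}). -/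

import Mathlib

/-- Partial sums `P(s) = a_1 + … + a_s` of a (0-indexed) sequence `a : ℕ → ℕ`. -/
def Pfun (a : ℕ → ℕ) (s : ℕ) : ℕ := ∑ i ∈ Finset.range s, a i

/-- `Pinv ν` is the smallest integer `s` with `P(s) ≥ ν`. -/
noncomputable def Pinv (a : ℕ → ℕ) (ν : ℕ) : ℕ := sInf {s : ℕ | ν ≤ Pfun a s}

/-- The rank of the submatrix of `G` formed by the thick columns indexed by `S`. -/
noncomputable def thickRank {K : Type*} [Field K] {R C : Type*} [Fintype C] [DecidableEq C]
    {α : ℕ} (G : Matrix R (C × Fin α) K) (S : Finset C) : ℕ :=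
  (G.submatrix id (fun p : {p : C × Fin α // p.1 ∈ S} => (p : C × Fin α))).rank

/- The thick Hamming distance between two words over the alphabet `F^α`, the thick
positions being indexed by `C`. -/
open scoped Classical in
noncomputable def thickDist {F C : Type*} [Fintype C] {α : ℕ}
    (v w : C × Fin α → F) : ℕ :=
  (Finset.univ.filter fun j : C => ∃ a, v (j, a) ≠ w (j, a)).card

/-!
Write `Θ w = ∑ wᵢ θᵢ` (injective, since the `θᵢ` are independent over `F_q`) and
`φ_c x = ∑ c_l x^{q^l}`, which is `F_q`-linear. Then the codeword of `c` at column `p` is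
`φ_c (Θ (Gᵀ p))`, so two codewords agree on a set `Z` of thick columns exactly when `φ_{u-v}` kills
`Θ` of the column space of `G|_Z`, a space of `F_q`-dimension `rank G|_Z`. A nonzero `φ_c` has at
most `q^{K-1}` roots, so its kernel has dimension `< K`; conversely every `F_q`-space of dimension
`< K` is killed by some nonzero `φ_c` (fewer linear equations than unknowns over `F`). Hence
`d_min = n - max {|Z| : rank G|_Z < K}`.

Since `G` is block diagonal, `rank G|_Z` is the sum of the ranks of its blocks. By the URA property
and subadditivity of `P` (the profile is non-increasing and periodic) this is at least `P(|Z|)`,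
with equality when `Z` consists of the first `s` columns of the `B`-blocks. So the maximum is
`P^{inv}(K) - 1`.
-/

open Finset Module Submodule Function
open scoped Matrix

section Profile

variable {a : ℕ → ℕ} {nL : ℕ}

theorem Pfun_add (x y : ℕ) : Pfun a (x + y) = Pfun a x + ∑ i ∈ range y, a (x + i) :=
  sum_range_add a x y

theorem Pfun_mono : Monotone (Pfun a) := fun _ _ h =>
  sum_le_sum_of_subset (range_subset_range.mpr h)

theorem Pfun_nL_add (hper : ∀ i, a (i + nL) = a i) (x : ℕ) :
    Pfun a (nL + x) = Pfun a nL + Pfun a x := by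
  rw [Pfun_add]
  congr 1
  exact sum_congr rfl fun i _ => by rw [add_comm, hper]

theorem Pfun_mul_add (hper : ∀ i, a (i + nL) = a i) (j x : ℕ) :
    Pfun a (nL * j + x) = j * Pfun a nL + Pfun a x := by
  induction j with
  | zero => simp
  | succ j ih =>
    rw [show nL * (j + 1) + x = nL + (nL * j + x) by ring, Pfun_nL_add hper, ih]
    ring

theorem Pfun_mul (hper : ∀ i, a (i + nL) = a i) (j : ℕ) : Pfun a (nL * j) = j * Pfun a nL := by
  simpa [Pfun] using Pfun_mul_add hper j 0

theorem sum_apply_min_sub_mul {f : ℕ → ℕ} (hf : ∀ j x, f (nL * j + x) = f (nL * j) + f x)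
    {t s : ℕ} (hs : s ≤ nL * t) : ∑ b : Fin t, f (min nL (s - nL * b)) = f s := by
  have hf0 : f 0 = 0 := by simpa using hf 0 0
  suffices ∀ n, ∑ b ∈ range n, f (min nL (s - nL * b)) = f (min s (nL * n)) by
    rw [Fin.sum_univ_eq_sum_range (fun b => f (min nL (s - nL * b))), this, min_eq_left hs]
  intro n
  induction n with
  | zero => simp [hf0]
  | succ n ih =>
    rw [sum_range_succ, ih, mul_add_one]
    rcases le_total s (nL * n) with h | h
    · rw [Nat.sub_eq_zero_of_le h, _root_.min_zero, hf0, add_zero, min_eq_left h,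
        min_eq_left (by omega)]
    · rw [min_eq_right h, ← hf]
      congr 1
      omega

theorem Pinv_le_iff {ν : ℕ} (h : ∃ s, ν ≤ Pfun a s) {s : ℕ} : Pinv a ν ≤ s ↔ ν ≤ Pfun a s :=
  ⟨fun hs => le_trans (Nat.sInf_mem (s := {s | ν ≤ Pfun a s}) h) (Pfun_mono hs),
    fun hs => Nat.sInf_le hs⟩

theorem Pfun_Pinv_sub_one_lt {ν : ℕ} (h : ∃ s, ν ≤ Pfun a s) (hν : 0 < ν) :
    Pfun a (Pinv a ν - 1) < ν := by
  by_contra! hle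
  have hPinv := (Pinv_le_iff h).mpr hle
  have h0 : ν ≤ Pfun a 0 := (Pinv_le_iff h).mp (by omega)
  simp [Pfun] at h0
  omega

theorem sum_window_le (hmono : ∀ i j, i ≤ j → j < nL → a j ≤ a i) {u v L : ℕ} (huv : u ≤ v)
    (hv : v + L ≤ nL) : ∑ i ∈ range L, a (v + i) ≤ ∑ i ∈ range L, a (u + i) :=
  sum_le_sum fun i hi => hmono _ _ (by omega) (by simp at hi; omega)

theorem Pfun_add_le (hper : ∀ i, a (i + nL) = a i) (hmono : ∀ i j, i ≤ j → j < nL → a j ≤ a i)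
    (hnL : 0 < nL) (x y : ℕ) : Pfun a (x + y) ≤ Pfun a x + Pfun a y := by
  induction hxy : x + y using Nat.strong_induction_on generalizing x y with
  | _ n ih =>
    subst hxy
    by_cases hx : nL ≤ x
    · obtain ⟨x, rfl⟩ := Nat.exists_eq_add_of_le hx
      have := ih (x + y) (by omega) x y rfl
      rw [add_assoc, Pfun_nL_add hper, Pfun_nL_add hper]
      omega
    by_cases hy : nL ≤ y
    · obtain ⟨y, rfl⟩ := Nat.exists_eq_add_of_le hy
      have := ih (x + y) (by omega) x y rfl
      rw [add_left_comm, Pfun_nL_add hper, Pfun_nL_add hper]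
      omega
    by_cases hsum : x + y ≤ nL
    · rw [Pfun_add]
      have := sum_window_le hmono (Nat.zero_le x) hsum
      simp only [zero_add] at this
      exact Nat.add_le_add_left this _
    · -- `[x, nL)` and `[z, y)` have the same length `y - z`, and the first lies to the right
      obtain ⟨z, hz⟩ : ∃ z, x + y = nL + z := ⟨x + y - nL, by omega⟩
      have hwin := sum_window_le hmono (show z ≤ x by omega) (show x + (y - z) ≤ nL by omega)
      have hPnL : Pfun a nL = Pfun a x + ∑ i ∈ range (y - z), a (x + i) := by
        rw [← Pfun_add]; congr 1; omega
      have hPy : Pfun a y = Pfun a z + ∑ i ∈ range (y - z), a (z + i) := by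
        rw [← Pfun_add]; congr 1; omega
      rw [hz, Pfun_nL_add hper]
      omega

end Profile

section Linearized

variable {F : Type*} [Field F] (Fq : Subfield F) [Fintype Fq]

noncomputable def linearizedMap {K : ℕ} (c : Fin K → F) : F →ₗ[Fq] F :=
  ∑ l, c l • (FiniteField.frobeniusAlgHom Fq F ^ (l : ℕ)).toLinearMap

theorem linearizedMap_apply {K : ℕ} (c : Fin K → F) (x : F) :
    linearizedMap Fq c x = ∑ l, c l * x ^ Fintype.card Fq ^ (l : ℕ) := by
  simp [linearizedMap, FiniteField.coe_frobeniusAlgHom, pow_iterate]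

variable {Fq}

open Polynomial in
theorem finrank_lt_of_le_ker_linearizedMap {K : ℕ} {c : Fin K → F} (hc : c ≠ 0)
    (V : Submodule Fq F) [FiniteDimensional Fq V]
    (hV : V ≤ LinearMap.ker (linearizedMap Fq c)) : finrank Fq V < K := by
  classical
  set q := Fintype.card Fq
  have hq : 1 < q := Fintype.one_lt_card
  obtain ⟨l₀, hl₀⟩ : ∃ l, c l ≠ 0 := by
    by_contra! h
    exact hc (funext h)
  -- the elements of `V` are roots of this nonzero polynomial of degree `≤ q^(K-1)`
  set P : F[X] := ∑ l, C (c l) * X ^ q ^ (l : ℕ)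
  have hP : P ≠ 0 := by
    refine ne_of_apply_ne (coeff · (q ^ (l₀ : ℕ))) ?_
    simpa [P, finsetSum_coeff, coeff_C_mul, coeff_X_pow,
      (Nat.pow_right_injective hq).eq_iff, Fin.val_inj] using hl₀
  have hdeg : P.natDegree ≤ q ^ (K - 1) :=
    natDegree_sum_le_of_forall_le _ _ fun l _ =>
      (natDegree_C_mul_X_pow_le _ _).trans (Nat.pow_le_pow_right hq.le (by omega))
  have hroots : (V : Set F) ⊆ P.roots.toFinset := fun x hx => by
    have hx := hV hx
    rw [LinearMap.mem_ker, linearizedMap_apply] at hx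
    simpa [mem_roots hP, P, eval_finsetSum] using hx
  have hcard : q ^ finrank Fq V ≤ q ^ (K - 1) := by
    calc q ^ finrank Fq V = Nat.card V := by
          rw [natCard_eq_pow_finrank (K := Fq) (V := V), Nat.card_eq_fintype_card]
      _ = (V : Set F).ncard := (Nat.card_coe_set_eq _).symm
      _ ≤ (P.roots.toFinset : Set F).ncard := Set.ncard_le_ncard hroots (finite_toSet _)
      _ ≤ P.roots.card := by rw [Set.ncard_coe_finset]; exact Multiset.toFinset_card_le _
      _ ≤ q ^ (K - 1) := (card_roots' P).trans hdeg
  have := (Nat.pow_le_pow_iff_right hq).mp hcard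
  have := l₀.pos
  omega

theorem exists_ne_zero_le_ker_linearizedMap {K : ℕ} (V : Submodule Fq F)
    [FiniteDimensional Fq V] (hV : finrank Fq V < K) :
    ∃ c : Fin K → F, c ≠ 0 ∧ V ≤ LinearMap.ker (linearizedMap Fq c) := by
  let e := finBasis Fq V
  let M : Matrix (Fin (finrank Fq V)) (Fin K) F :=
    Matrix.of fun i l => (e i : F) ^ Fintype.card Fq ^ (l : ℕ)
  obtain ⟨c, hc, hc0⟩ := (Submodule.ne_bot_iff _).mp
    (LinearMap.ker_ne_bot_of_finrank_lt (f := M.mulVecLin) (by simpa using hV))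
  refine ⟨c, hc0, fun x hx => ?_⟩
  have hcomp : (linearizedMap Fq c).comp V.subtype = 0 := e.ext fun i => by
    simpa [linearizedMap_apply, M, Matrix.mulVec, dotProduct, mul_comm] using congrFun hc i
  simpa using LinearMap.congr_fun hcomp ⟨x, hx⟩

end Linearized

section ThickRank

variable {k R C : Type*} [Field k] [Fintype C] [DecidableEq C] {α : ℕ}

theorem thickRank_eq_finrank_span (G : Matrix R (C × Fin α) k) (Z : Finset C) :
    thickRank G Z = finrank k (span k (Gᵀ '' {p | p.1 ∈ Z})) := by
  have hcols : Set.range (G.submatrix id fun p : {p : C × Fin α // p.1 ∈ Z} => p.1).col =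
      Gᵀ '' {p | p.1 ∈ Z} := by
    ext v
    constructor
    · rintro ⟨p, rfl⟩
      exact ⟨p.1, p.2, rfl⟩
    · rintro ⟨p, hp, rfl⟩
      exact ⟨⟨p, hp⟩, rfl⟩
  rw [thickRank, Matrix.rank_eq_finrank_span_cols, hcols]

theorem thickRank_le_card_mul (G : Matrix R (C × Fin α) k) (Z : Finset C) :
    thickRank G Z ≤ #Z * α := by
  refine (Matrix.rank_le_card_width _).trans_eq ?_
  rw [Fintype.card_subtype, show ({p | p.1 ∈ Z} : Finset (C × Fin α)) = Z ×ˢ univ by ext; simp,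
    card_product, card_univ, Fintype.card_fin]

theorem finrank_span_eq_sum_of_blocks [Fintype R] {ι β : Type*} [Fintype β] (v : ι → R → k)
    (ρ : R → β) (κ : ι → β) (hv : ∀ i r, ρ r ≠ κ i → v i r = 0) (s : Set ι) :
    finrank k (span k (v '' s)) = ∑ b, finrank k (span k (v '' {i ∈ s | κ i = b})) := by
  classical
  set W := fun b => span k (v '' {i ∈ s | κ i = b})
  have hsupp : ∀ b, ∀ w ∈ W b, ∀ r, ρ r ≠ b → w r = 0 := by
    intro b w hw r hr
    induction hw using span_induction with
    | mem x hx =>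
      obtain ⟨i, ⟨-, rfl⟩, rfl⟩ := hx
      exact hv i r hr
    | zero => rfl
    | add x y _ _ hx hy => simp [hx, hy]
    | smul c x _ hx => simp [hx]
  -- summing the blocks is injective because they have disjoint row supports
  let Ψ : (Π b, W b) →ₗ[k] (R → k) := ∑ b, (W b).subtype ∘ₗ LinearMap.proj b
  have hΨ : ∀ w, Ψ w = ∑ b, (w b : R → k) := fun w => by simp [Ψ]
  have hinj : Function.Injective Ψ := by
    intro w w' h
    funext b
    ext r
    by_cases hr : ρ r = b
    · subst hr
      have := congrFun h r
      simp only [hΨ, Finset.sum_apply] at this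
      rwa [sum_eq_single (ρ r) (fun b _ hb => hsupp b _ (w b).2 r (Ne.symm hb)) (by simp),
        sum_eq_single (ρ r) (fun b _ hb => hsupp b _ (w' b).2 r (Ne.symm hb)) (by simp)] at this
    · rw [hsupp b _ (w b).2 r hr, hsupp b _ (w' b).2 r hr]
  have hrange : LinearMap.range Ψ = span k (v '' s) := by
    apply le_antisymm
    · rintro _ ⟨w, rfl⟩
      rw [hΨ]
      exact sum_mem fun b _ => span_mono (Set.image_mono fun i hi => hi.1) (w b).2
    · refine span_le.mpr ?_
      rintro _ ⟨i, hi, rfl⟩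
      refine ⟨Pi.single (κ i) ⟨v i, ?_⟩, ?_⟩
      · exact subset_span (Set.mem_image_of_mem v ⟨hi, rfl⟩)
      · rw [hΨ, sum_eq_single (κ i) (fun b _ hb => by rw [Pi.single_eq_of_ne hb]; rfl)
          (by simp), Pi.single_eq_same]
  rw [← hrange, LinearMap.finrank_range_of_inj hinj, finrank_pi_fintype]

@[simp]
theorem thickRank_empty (G : Matrix R (C × Fin α) k) : thickRank G ∅ = 0 :=
  Nat.le_zero.mp ((thickRank_le_card_mul G ∅).trans_eq (by simp))

theorem thickRank_eq_sum_of_blocks [Fintype R] {β : Type*} [Fintype β] [DecidableEq β]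
    (G : Matrix R (C × Fin α) k) (ρ : R → β) (κ : C → β) (hG : ∀ r p, ρ r ≠ κ p.1 → G r p = 0)
    (Z : Finset C) : thickRank G Z = ∑ b, thickRank G {x ∈ Z | κ x = b} := by
  classical
  simp only [thickRank_eq_finrank_span]
  rw [finrank_span_eq_sum_of_blocks Gᵀ ρ (κ ∘ Prod.fst) (fun p r h => hG r p h)]
  refine sum_congr rfl fun b _ => ?_
  congr 3
  all_goals ext p; simp

end ThickRank

section BlockMatrix

variable {k : Type*} [Field k] {t Δ KL nL α : ℕ}

def blockURAMatrix (t Δ : ℕ) (B : Matrix (Fin KL) (Fin nL × Fin α) k) :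
    Matrix ((Fin t × Fin KL) ⊕ (Fin Δ × Fin α)) (((Fin t × Fin nL) ⊕ Fin Δ) × Fin α) k :=
  Matrix.of fun r p => match r, p with
    | .inl (b, i), (.inl (b', j), c) => if b = b' then B i (j, c) else 0
    | .inr (d, e), (.inr d', c) => if d = d' ∧ e = c then 1 else 0
    | _, _ => 0

def blockIndex : (Fin t × Fin nL) ⊕ Fin Δ → Fin t ⊕ Fin Δ := Sum.map Prod.fst id

@[simp]
theorem blockIndex_inl (b : Fin t) (j : Fin nL) :
    blockIndex (Δ := Δ) (.inl (b, j)) = .inl b := rfl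

@[simp]
theorem blockIndex_inr (d : Fin Δ) : blockIndex (t := t) (nL := nL) (.inr d) = .inr d := rfl

variable (B : Matrix (Fin KL) (Fin nL × Fin α) k)

theorem blockURAMatrix_eq_zero_of_ne (r : (Fin t × Fin KL) ⊕ (Fin Δ × Fin α))
    (p : ((Fin t × Fin nL) ⊕ Fin Δ) × Fin α) (h : Sum.map Prod.fst Prod.fst r ≠ blockIndex p.1) :
    blockURAMatrix t Δ B r p = 0 := by
  rcases r with ⟨b, i⟩ | ⟨d, e⟩ <;> rcases p with ⟨⟨b', j⟩ | d', c⟩ <;>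
    simp_all [blockURAMatrix]

theorem blockURAMatrix_transpose_inl (b : Fin t) (j : Fin nL) (c : Fin α) :
    (blockURAMatrix t Δ B)ᵀ (.inl (b, j), c) =
      ExtendByZero.linearMap k (fun i => .inl (b, i)) (Bᵀ (j, c)) := by
  ext (⟨b', i⟩ | ⟨d, e⟩)
  · by_cases hb : b' = b
    · subst hb
      have hinj : Injective fun i : Fin KL => (Sum.inl (b', i) : _ ⊕ (Fin Δ × Fin α)) :=
        fun _ _ h => by simpa using h
      simp [blockURAMatrix, hinj.extend_apply]
    · rw [ExtendByZero.linearMap_apply, extend_apply' _ _ _ (by simp [Ne.symm hb])]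
      simp [blockURAMatrix, hb]
  · rw [ExtendByZero.linearMap_apply, extend_apply' _ _ _ (by simp)]
    simp [blockURAMatrix]

theorem blockURAMatrix_transpose_inr (d : Fin Δ) (c : Fin α) :
    (blockURAMatrix t Δ B)ᵀ (.inr d, c) = Pi.single (.inr (d, c)) 1 := by
  ext (⟨b', i⟩ | ⟨d', e⟩)
  · simp [blockURAMatrix]
  · simp [blockURAMatrix, Pi.single_apply, eq_comm]

theorem thickRank_blockURAMatrix_map_inl (b : Fin t) (S : Finset (Fin nL)) :
    thickRank (blockURAMatrix t Δ B) (S.map ((Embedding.sectR b _).trans .inl)) =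
      thickRank B S := by
  have hinj : Injective fun i : Fin KL => (Sum.inl (b, i) : _ ⊕ (Fin Δ × Fin α)) :=
    fun _ _ h => by simpa using h
  have hcols : (blockURAMatrix t Δ B)ᵀ '' {p | p.1 ∈ S.map ((Embedding.sectR b _).trans .inl)} =
      ExtendByZero.linearMap k (fun i => .inl (b, i)) '' (Bᵀ '' {p | p.1 ∈ S}) := by
    ext v
    constructor
    · rintro ⟨⟨x, c⟩, hx, rfl⟩
      obtain ⟨j, hj, rfl⟩ := mem_map.mp hx
      exact ⟨_, ⟨(j, c), hj, rfl⟩, (blockURAMatrix_transpose_inl B b j c).symm⟩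
    · rintro ⟨_, ⟨⟨j, c⟩, hj, rfl⟩, rfl⟩
      exact ⟨(.inl (b, j), c), mem_map_of_mem ((Embedding.sectR b _).trans .inl) hj,
        blockURAMatrix_transpose_inl B b j c⟩
  rw [thickRank_eq_finrank_span, thickRank_eq_finrank_span, hcols, span_image]
  exact (LinearEquiv.finrank_eq (equivMapOfInjective (ExtendByZero.linearMap k _)
    (extend_injective hinj 0) _)).symm

theorem thickRank_blockURAMatrix_inr (d : Fin Δ) :
    thickRank (blockURAMatrix t Δ B) {.inr d} = α := by
  have hcols : (blockURAMatrix t Δ B)ᵀ '' {p | p.1 ∈ ({.inr d} : Finset _)} =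
      Set.range fun c => Pi.single (.inr (d, c)) 1 := by
    ext v
    constructor
    · rintro ⟨⟨x, c⟩, hx, rfl⟩
      obtain rfl := mem_singleton.mp hx
      exact ⟨c, (blockURAMatrix_transpose_inr B d c).symm⟩
    · rintro ⟨c, rfl⟩
      exact ⟨(.inr d, c), mem_singleton_self _, blockURAMatrix_transpose_inr B d c⟩
  have hli : LinearIndependent k fun c : Fin α =>
      (Pi.single (.inr (d, c)) 1 : (Fin t × Fin KL) ⊕ (Fin Δ × Fin α) → k) :=
    (Pi.linearIndependent_single_one _ k).comp _ fun _ _ h => by simpa using h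
  rw [thickRank_eq_finrank_span, hcols, finrank_span_eq_card hli, Fintype.card_fin]

theorem filter_blockIndex_eq_inl (Z : Finset ((Fin t × Fin nL) ⊕ Fin Δ)) (b : Fin t) :
    {x ∈ Z | blockIndex x = .inl b} =
      ({j | .inl (b, j) ∈ Z} : Finset (Fin nL)).map ((Embedding.sectR b _).trans .inl) := by
  ext (⟨b', j⟩ | d)
  · by_cases hb : b' = b
    · simp [hb]
    · simp [hb, Ne.symm hb]
  · simp

theorem filter_blockIndex_eq_inr_subset (Z : Finset ((Fin t × Fin nL) ⊕ Fin Δ)) (d : Fin Δ) :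
    {x ∈ Z | blockIndex x = .inr d} ⊆ {.inr d} := by
  intro x hx
  rcases x with ⟨b, j⟩ | d' <;> simp_all

variable {a : ℕ → ℕ}

theorem Pfun_card_le_thickRank_blockURAMatrix (hper : ∀ i, a (i + nL) = a i)
    (hmono : ∀ i j, i ≤ j → j < nL → a j ≤ a i) (hnL : 0 < nL)
    (hB : ∀ S, thickRank B S = Pfun a #S) (Z : Finset ((Fin t × Fin nL) ⊕ Fin Δ)) :
    Pfun a #Z ≤ thickRank (blockURAMatrix t Δ B) Z := by
  have hblock : ∀ β, Pfun a #{x ∈ Z | blockIndex x = β} ≤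
      thickRank (blockURAMatrix t Δ B) {x ∈ Z | blockIndex x = β} := by
    rintro (b | d)
    · rw [filter_blockIndex_eq_inl, card_map, thickRank_blockURAMatrix_map_inl, hB]
    · rcases subset_singleton_iff.mp (filter_blockIndex_eq_inr_subset Z d) with h | h <;> rw [h]
      · simp [Pfun]
      · calc Pfun a #{Sum.inr d} = thickRank B {⟨0, hnL⟩} := by rw [hB]; rfl
          _ ≤ α := (thickRank_le_card_mul B _).trans_eq (by simp)
          _ = _ := (thickRank_blockURAMatrix_inr B d).symm
  calc Pfun a #Z = Pfun a (∑ β, #{x ∈ Z | blockIndex x = β}) := by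
        rw [card_eq_sum_card_fiberwise fun x _ => mem_univ (blockIndex x)]
    _ ≤ ∑ β, Pfun a #{x ∈ Z | blockIndex x = β} :=
        le_sum_of_subadditive _ le_rfl (Pfun_add_le hper hmono hnL) _ _
    _ ≤ _ := sum_le_sum fun β _ => hblock β
    _ = _ := (thickRank_eq_sum_of_blocks _ _ _ (blockURAMatrix_eq_zero_of_ne B) Z).symm

theorem exists_card_eq_thickRank_blockURAMatrix_eq (hper : ∀ i, a (i + nL) = a i)
    (hB : ∀ S, thickRank B S = Pfun a #S) {s : ℕ} (hs : s ≤ nL * t) :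
    ∃ Z : Finset ((Fin t × Fin nL) ⊕ Fin Δ),
      #Z = s ∧ thickRank (blockURAMatrix t Δ B) Z = Pfun a s := by
  -- the first `s` thick columns, in the order `(b, j) ↦ nL * b + j`
  let Z : Finset ((Fin t × Fin nL) ⊕ Fin Δ) := ({y | nL * y.1 + y.2 < s} : Finset _).disjSum ∅
  have hsec : ∀ b : Fin t, #({j | .inl (b, j) ∈ Z} : Finset (Fin nL)) = min nL (s - nL * b) := by
    intro b
    rw [← Fin.card_filter_val_lt]
    congr 1
    ext j
    simp [Z]
    omega
  have hinr : ∀ d : Fin Δ, ({x ∈ Z | blockIndex x = .inr d} : Finset _) = ∅ := by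
    intro d
    ext (⟨b, j⟩ | x) <;> simp [Z]
  refine ⟨Z, ?_, ?_⟩
  · rw [card_eq_sum_card_fiberwise fun x _ => mem_univ (blockIndex x),
      Fintype.sum_sum_type]
    simp only [filter_blockIndex_eq_inl, card_map, hsec, hinr, card_empty, sum_const_zero, add_zero]
    exact sum_apply_min_sub_mul (f := id) (fun _ _ => rfl) hs
  · rw [thickRank_eq_sum_of_blocks _ _ _ (blockURAMatrix_eq_zero_of_ne B), Fintype.sum_sum_type]
    simp only [filter_blockIndex_eq_inl, thickRank_blockURAMatrix_map_inl, hB, hsec, hinr,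
      thickRank_empty, sum_const_zero, add_zero]
    exact sum_apply_min_sub_mul (fun j x => by rw [Pfun_mul_add hper, Pfun_mul hper]) hs

end BlockMatrix

section Distance

variable {F C : Type*} [Fintype C] {α : ℕ}

theorem thickDist_add_card_eq (v w : C × Fin α → F) {Z : Finset C}
    (hZ : ∀ j, j ∈ Z ↔ ∀ e, v (j, e) = w (j, e)) : thickDist v w + #Z = Fintype.card C := by
  classical
  rw [thickDist, ← card_univ, ← card_filter_add_card_filter_not (s := univ)
    (fun j => ∃ e, v (j, e) ≠ w (j, e))]
  congr 2
  ext j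
  simp [hZ]

@[simp]
theorem thickDist_self (v : C × Fin α → F) : thickDist v v = 0 := by
  simp [thickDist]

end Distance

section LinearizedCode

variable {F : Type*} [Field F] {Fq : Subfield F} {R : Type*} [Fintype R] {θ : R → F}

theorem finrank_span_linearCombination_eq_thickRank {C : Type*} [Fintype C] [DecidableEq C]
    {α : ℕ} (hθ : LinearIndependent Fq θ) (G : Matrix R (C × Fin α) Fq) (Z : Finset C) :
    finrank Fq (span Fq (Fintype.linearCombination Fq θ '' (Gᵀ '' {p | p.1 ∈ Z}))) =
      thickRank G Z := by
  rw [thickRank_eq_finrank_span, span_image]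
  exact (LinearEquiv.finrank_eq (equivMapOfInjective _
    (linearIndependent_iff_injective_fintypeLinearCombination.mp hθ) _)).symm

variable [Fintype Fq] {D : Type*} {K : ℕ}

noncomputable def linearizedEncoder (Fq : Subfield F) [Fintype Fq] (θ : R → F)
    (G : Matrix R D Fq) (u : Fin K → F) (p : D) : F :=
  linearizedMap Fq u (Fintype.linearCombination Fq θ (Gᵀ p))

theorem linearizedEncoder_eq_sum (θ : R → F) (G : Matrix R D Fq) (u : Fin K → F) (p : D) :
    linearizedEncoder Fq θ G u p =
      ∑ i, (∑ l, u l * θ i ^ Fintype.card Fq ^ (l : ℕ)) * (G i p : F) := by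
  rw [linearizedEncoder, Fintype.linearCombination_apply, map_sum]
  refine sum_congr rfl fun i _ => ?_
  rw [map_smul, linearizedMap_apply, Subfield.smul_def, smul_eq_mul, mul_comm]
  rfl

theorem linearizedEncoder_sub (G : Matrix R D Fq) (u v : Fin K → F) (p : D) :
    linearizedEncoder Fq θ G u p - linearizedEncoder Fq θ G v p =
      linearizedEncoder Fq θ G (u - v) p := by
  simp [linearizedEncoder, linearizedMap_apply, sub_mul]

theorem linearizedEncoder_zero (G : Matrix R D Fq) (p : D) :
    linearizedEncoder Fq θ G (0 : Fin K → F) p = 0 := by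
  simp [linearizedEncoder, linearizedMap_apply]

variable {C : Type*} [Fintype C] [DecidableEq C] {α : ℕ}

theorem thickRank_lt_of_linearizedEncoder_eq_zero (hθ : LinearIndependent Fq θ)
    (G : Matrix R (C × Fin α) Fq) {c : Fin K → F} (hc : c ≠ 0) {Z : Finset C}
    (hZ : ∀ p : C × Fin α, p.1 ∈ Z → linearizedEncoder Fq θ G c p = 0) : thickRank G Z < K := by
  have := FiniteDimensional.span_of_finite Fq
    (((Set.toFinite {p : C × Fin α | p.1 ∈ Z}).image Gᵀ).image (Fintype.linearCombination Fq θ))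
  rw [← finrank_span_linearCombination_eq_thickRank hθ]
  refine finrank_lt_of_le_ker_linearizedMap hc _ (span_le.mpr ?_)
  rintro _ ⟨_, ⟨p, hp, rfl⟩, rfl⟩
  exact hZ p hp

theorem exists_linearizedEncoder_eq_zero_of_thickRank_lt (hθ : LinearIndependent Fq θ)
    (G : Matrix R (C × Fin α) Fq) {Z : Finset C} (hZ : thickRank G Z < K) :
    ∃ c : Fin K → F, c ≠ 0 ∧ ∀ p : C × Fin α, p.1 ∈ Z → linearizedEncoder Fq θ G c p = 0 := by
  have := FiniteDimensional.span_of_finite Fq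
    (((Set.toFinite {p : C × Fin α | p.1 ∈ Z}).image Gᵀ).image (Fintype.linearCombination Fq θ))
  rw [← finrank_span_linearCombination_eq_thickRank hθ] at hZ
  obtain ⟨c, hc, hker⟩ := exists_ne_zero_le_ker_linearizedMap _ hZ
  exact ⟨c, hc, fun p hp => hker (subset_span ⟨_, ⟨p, hp, rfl⟩, rfl⟩)⟩

theorem lt_thickDist_add_Pinv (hθ : LinearIndependent Fq θ) (G : Matrix R (C × Fin α) Fq)
    {a : ℕ → ℕ} (hG : ∀ Z, Pfun a #Z ≤ thickRank G Z) (hK : ∃ s, K ≤ Pfun a s)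
    {u v : Fin K → F} (huv : u ≠ v) :
    Fintype.card C <
      thickDist (linearizedEncoder Fq θ G u) (linearizedEncoder Fq θ G v) + Pinv a K := by
  classical
  let Z : Finset C :=
    {j | ∀ e, linearizedEncoder Fq θ G u (j, e) = linearizedEncoder Fq θ G v (j, e)}
  have hdist := thickDist_add_card_eq (linearizedEncoder Fq θ G u)
    (linearizedEncoder Fq θ G v) (Z := Z) (fun j => by simp [Z])
  have hrank : thickRank G Z < K :=
    thickRank_lt_of_linearizedEncoder_eq_zero hθ G (sub_ne_zero.mpr huv) fun p hp => by
      rw [← linearizedEncoder_sub, sub_eq_zero]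
      exact (mem_filter.mp hp).2 p.2
  have hZ : ¬Pinv a K ≤ #Z := fun h => by
    have := (Pinv_le_iff hK).mp h
    have := hG Z
    omega
  omega

theorem exists_thickDist_add_card_le (hθ : LinearIndependent Fq θ)
    (G : Matrix R (C × Fin α) Fq) {Z : Finset C} (hZ : thickRank G Z < K) :
    ∃ u v : Fin K → F, u ≠ v ∧
      thickDist (linearizedEncoder Fq θ G u) (linearizedEncoder Fq θ G v) + #Z ≤
        Fintype.card C := by
  classical
  obtain ⟨c, hc, hcZ⟩ := exists_linearizedEncoder_eq_zero_of_thickRank_lt hθ G hZ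
  refine ⟨c, 0, hc, ?_⟩
  let A : Finset C := {j | ∀ e, linearizedEncoder Fq θ G c (j, e) = 0}
  have hdist := thickDist_add_card_eq (linearizedEncoder Fq θ G c)
    (linearizedEncoder Fq θ G (0 : Fin K → F)) (Z := A)
    (fun j => by simp [A, linearizedEncoder_zero])
  have hZA : Z ⊆ A := fun j hj => mem_filter.mpr ⟨mem_univ _, fun e => hcZ (j, e) hj⟩
  have := card_le_card hZA
  omega

end LinearizedCode

theorem stmt_11_general (q nL α t Δ K : ℕ)
    (hnL : 0 < nL) (hK : 0 < K)
    (a : ℕ → ℕ) (hper : ∀ i, a (i + nL) = a i)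
    (hmono : ∀ i j, i ≤ j → j < nL → a j ≤ a i)
    (hKtKL : K ≤ t * Pfun a nL)
    (F : Type*) [Field F] (Fq : Subfield F) [Fintype Fq]
    (hcard : Fintype.card Fq = q)
    (B : Matrix (Fin (Pfun a nL)) (Fin nL × Fin α) Fq)
    (hB : ∀ S : Finset (Fin nL), thickRank B S = Pfun a S.card)
    (G : Matrix ((Fin t × Fin (Pfun a nL)) ⊕ (Fin Δ × Fin α))
          (((Fin t × Fin nL) ⊕ Fin Δ) × Fin α) Fq)
    (hG1 : ∀ b i b' j c,
      G (Sum.inl (b, i)) (Sum.inl (b', j), c) = if b = b' then B i (j, c) else 0)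
    (hG2 : ∀ b i d c, G (Sum.inl (b, i)) (Sum.inr d, c) = 0)
    (hG3 : ∀ d e b' j c, G (Sum.inr (d, e)) (Sum.inl (b', j), c) = 0)
    (hG4 : ∀ d e d' c,
      G (Sum.inr (d, e)) (Sum.inr d', c) = if d = d' ∧ e = c then 1 else 0)
    (θ : (Fin t × Fin (Pfun a nL)) ⊕ (Fin Δ × Fin α) → F) (hθ : LinearIndependent Fq θ)
    (enc : (Fin K → F) → (((Fin t × Fin nL) ⊕ Fin Δ) × Fin α → F))
    (henc : ∀ u p, enc u p = ∑ i, (∑ l, u l * θ i ^ q ^ (l : ℕ)) * (G i p : F)) :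
    Function.Injective enc
    ∧ (∀ u v, u ≠ v → t * nL + Δ - Pinv a K + 1 ≤ thickDist (enc u) (enc v))
    ∧ (∃ u v, u ≠ v ∧ thickDist (enc u) (enc v) = t * nL + Δ - Pinv a K + 1) := by
  subst hcard
  obtain rfl : G = blockURAMatrix t Δ B := by
    ext (⟨b, i⟩ | ⟨d, e⟩) ⟨⟨b', j⟩ | d', c⟩ <;> simp [blockURAMatrix, hG1, hG2, hG3, hG4]
  obtain rfl : enc = linearizedEncoder Fq θ (blockURAMatrix t Δ B) :=
    funext₂ fun u p => by rw [henc, linearizedEncoder_eq_sum]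
  have hPfun : K ≤ Pfun a (nL * t) := by rwa [Pfun_mul hper]
  have hPinv_le : Pinv a K ≤ nL * t := (Pinv_le_iff ⟨_, hPfun⟩).mpr hPfun
  have hcard : Fintype.card ((Fin t × Fin nL) ⊕ Fin Δ) = nL * t + Δ := by simp [Nat.mul_comm]
  have hlower := fun u v (huv : u ≠ v) => lt_thickDist_add_Pinv hθ _
    (Pfun_card_le_thickRank_blockURAMatrix B hper hmono hnL hB) ⟨_, hPfun⟩ huv
  obtain ⟨Z, hZcard, hZrank⟩ := exists_card_eq_thickRank_blockURAMatrix_eq (t := t) (Δ := Δ)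
    B hper hB (s := Pinv a K - 1) (by omega)
  obtain ⟨u, v, huv, hupper⟩ := exists_thickDist_add_card_le hθ (blockURAMatrix t Δ B) (Z := Z)
    (hZrank ▸ Pfun_Pinv_sub_one_lt ⟨_, hPfun⟩ hK)
  rw [Nat.mul_comm t nL]
  refine ⟨fun u v h => by_contra fun huv => ?_, fun u v huv => ?_, u, v, huv, ?_⟩
  · have := hlower u v huv
    rw [h, thickDist_self] at this
    omega
  all_goals have := hlower u v huv; omega

/-- **Theorem 3: information locality construction.**  Let `q` be a prime
power, `Fq` a subfield with `q` elements of a field `F` with `[F : Fq] = m`.  Let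
`nL, α, t, Δ, K` be positive integers, `a_1 ≥ … ≥ a_{nL} ≥ 0` a profile with
`K_L := P(nL) ≥ 1` (0-indexed periodic extension `a`), and assume `K ≤ t·K_L` and
`m ≥ t·K_L + Δ·α`.  Let `B` be a `K_L × (nL·α)` URA matrix over `Fq` with this profile and
let `G` be the `(t·K_L + Δα) × (t·nL·α + Δα)` block-diagonal matrix whose first `t`
diagonal blocks are copies of `B` and whose last diagonal block is the `(Δα) × (Δα)`
identity; `G` has `n := t·nL + Δ` thick columns of width `α` (rows are indexed by
`(Fin t × Fin K_L) ⊕ (Fin Δ × Fin α)` and thick columns by `(Fin t × Fin nL) ⊕ Fin Δ`).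
Let `θ` be a family of `t·K_L + Δα` elements of `F` linearly independent over `Fq`, and let
`C` consist of all vectors `(f(θ_1),…,f(θ_{tK_L+Δα}))·G`, where `f` ranges over linearized
polynomials of `q`-degree at most `K - 1` over `F`.  Then the encoding map is injective and
the minimum thick Hamming distance of `C`, viewed as a length-`n` code over the alphabet
`F^α`, is exactly `d_min = n - P^{inv}(K) + 1`. -/
theorem stmt_11 (q m nL α t Δ K : ℕ) (hq : IsPrimePow q)
    (hnL : 0 < nL) (hα : 0 < α) (ht : 0 < t) (hΔ : 0 < Δ) (hK : 0 < K)
    (a : ℕ → ℕ) (hper : ∀ i, a (i + nL) = a i)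
    (hmono : ∀ i j, i ≤ j → j < nL → a j ≤ a i)
    (hKL : 1 ≤ Pfun a nL)
    (hKtKL : K ≤ t * Pfun a nL) (hm : t * Pfun a nL + Δ * α ≤ m)
    (F : Type*) [Field F] (Fq : Subfield F) [Fintype Fq]
    (hcard : Fintype.card Fq = q) (hmF : Module.finrank Fq F = m)
    (B : Matrix (Fin (Pfun a nL)) (Fin nL × Fin α) Fq)
    (hB : ∀ S : Finset (Fin nL), thickRank B S = Pfun a S.card)
    (G : Matrix ((Fin t × Fin (Pfun a nL)) ⊕ (Fin Δ × Fin α))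
          (((Fin t × Fin nL) ⊕ Fin Δ) × Fin α) Fq)
    (hG1 : ∀ b i b' j c,
      G (Sum.inl (b, i)) (Sum.inl (b', j), c) = if b = b' then B i (j, c) else 0)
    (hG2 : ∀ b i d c, G (Sum.inl (b, i)) (Sum.inr d, c) = 0)
    (hG3 : ∀ d e b' j c, G (Sum.inr (d, e)) (Sum.inl (b', j), c) = 0)
    (hG4 : ∀ d e d' c,
      G (Sum.inr (d, e)) (Sum.inr d', c) = if d = d' ∧ e = c then 1 else 0)
    (θ : (Fin t × Fin (Pfun a nL)) ⊕ (Fin Δ × Fin α) → F) (hθ : LinearIndependent Fq θ)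
    (enc : (Fin K → F) → (((Fin t × Fin nL) ⊕ Fin Δ) × Fin α → F))
    (henc : ∀ u p, enc u p = ∑ i, (∑ l, u l * θ i ^ q ^ (l : ℕ)) * (G i p : F)) :
    Function.Injective enc
    ∧ (∀ u v, u ≠ v → t * nL + Δ - Pinv a K + 1 ≤ thickDist (enc u) (enc v))
    ∧ (∃ u v, u ≠ v ∧ thickDist (enc u) (enc v) = t * nL + Δ - Pinv a K + 1) :=
  stmt_11_general q nL α t Δ K hnL hK a hper hmono hKtKL F Fq hcard B hB G hG1 hG2 hG3 hG4 θ hθ enc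
    henc
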